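/- (Lemma 1, feature part: E(3)-invariance of the bilevel attention feature update.) In the bilevel attention setup, define the feature update h'ᵢ(p) = hᵢ(p) + ∑_{j∈J} β_j • φ_m(∑_q α_j[p,q] • (W_Vᵀ h_j(q))). Then h'ᵢ is invariant under rigid motions: replacing every coordinate x of every atom of every block by Q x + t, for any 3×3 real orthogonal matrix Q and t ∈ ℝ³, yields the same function h'ᵢ. -/

import Mathlib

open scoped BigOperators RealInnerProductSpace

/-- Atom-level correlation between block `i` and a neighbor block `j`:
`R[p,q] = (1/√d_r) ⟨W_Qᵀ hᵢ(p), W_Kᵀ h_j(q)⟩ + σ_D(‖xᵢ(p) − x_j(q)‖)`. -/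
noncomputable def Rcorr {d dr ni nj : ℕ}
    (WQ WK : Matrix (Fin d) (Fin dr) ℝ) (σD : ℝ → ℝ)
    (hi : Fin ni → EuclideanSpace ℝ (Fin d)) (xi : Fin ni → EuclideanSpace ℝ (Fin 3))
    (hj : Fin nj → EuclideanSpace ℝ (Fin d)) (xj : Fin nj → EuclideanSpace ℝ (Fin 3))
    (p : Fin ni) (q : Fin nj) : ℝ :=
  (1 / Real.sqrt dr) *
      ⟪Matrix.toEuclideanLin WQ.transpose (hi p),
        Matrix.toEuclideanLin WK.transpose (hj q)⟫
    + σD ‖xi p - xj q‖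

/-- Atom-level cross attention `α[p,q] = exp(R[p,q]) / ∑_{q'} exp(R[p,q'])`. -/
noncomputable def alphaAtt {d dr ni nj : ℕ}
    (WQ WK : Matrix (Fin d) (Fin dr) ℝ) (σD : ℝ → ℝ)
    (hi : Fin ni → EuclideanSpace ℝ (Fin d)) (xi : Fin ni → EuclideanSpace ℝ (Fin 3))
    (hj : Fin nj → EuclideanSpace ℝ (Fin d)) (xj : Fin nj → EuclideanSpace ℝ (Fin 3))
    (p : Fin ni) (q : Fin nj) : ℝ :=
  Real.exp (Rcorr WQ WK σD hi xi hj xj p q) /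
    ∑ q' : Fin nj, Real.exp (Rcorr WQ WK σD hi xi hj xj p q')

/-- Block-level correlation `r_j = (1/(nᵢ n_j)) ∑_{p,q} R_j[p,q] + e_j`. -/
noncomputable def rBlock {d dr ni nj : ℕ}
    (WQ WK : Matrix (Fin d) (Fin dr) ℝ) (σD : ℝ → ℝ)
    (hi : Fin ni → EuclideanSpace ℝ (Fin d)) (xi : Fin ni → EuclideanSpace ℝ (Fin 3))
    (hj : Fin nj → EuclideanSpace ℝ (Fin d)) (xj : Fin nj → EuclideanSpace ℝ (Fin 3))
    (ej : ℝ) : ℝ :=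
  (1 / ((ni : ℝ) * (nj : ℝ))) *
      (∑ p : Fin ni, ∑ q : Fin nj, Rcorr WQ WK σD hi xi hj xj p q)
    + ej

/-- Block-level cross attention `β_j = exp(r_j) / ∑_{j'∈J} exp(r_{j'})`. -/
noncomputable def betaAtt {d dr ni : ℕ} {ι : Type*} [Fintype ι]
    (WQ WK : Matrix (Fin d) (Fin dr) ℝ) (σD : ℝ → ℝ)
    (hi : Fin ni → EuclideanSpace ℝ (Fin d)) (xi : Fin ni → EuclideanSpace ℝ (Fin 3))
    (nb : ι → ℕ)
    (hb : ∀ j, Fin (nb j) → EuclideanSpace ℝ (Fin d))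
    (xb : ∀ j, Fin (nb j) → EuclideanSpace ℝ (Fin 3))
    (e : ι → ℝ) (j : ι) : ℝ :=
  Real.exp (rBlock WQ WK σD hi xi (hb j) (xb j) (e j)) /
    ∑ j' : ι, Real.exp (rBlock WQ WK σD hi xi (hb j') (xb j') (e j'))

/-- Coordinate update of the bilevel attention module:
`x'ᵢ(p) = xᵢ(p) + ∑_{j∈J} β_j ∑_q α_j[p,q] · φ_X(R_j[p,q]) • (xᵢ(p) − x_j(q))`. -/
noncomputable def coordUpdate {d dr ni : ℕ} {ι : Type*} [Fintype ι]
    (WQ WK : Matrix (Fin d) (Fin dr) ℝ) (σD : ℝ → ℝ) (φX : ℝ → ℝ)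
    (hi : Fin ni → EuclideanSpace ℝ (Fin d)) (xi : Fin ni → EuclideanSpace ℝ (Fin 3))
    (nb : ι → ℕ)
    (hb : ∀ j, Fin (nb j) → EuclideanSpace ℝ (Fin d))
    (xb : ∀ j, Fin (nb j) → EuclideanSpace ℝ (Fin 3))
    (e : ι → ℝ) (p : Fin ni) : EuclideanSpace ℝ (Fin 3) :=
  xi p + ∑ j : ι, betaAtt WQ WK σD hi xi nb hb xb e j •
    ∑ q : Fin (nb j),
      (alphaAtt WQ WK σD hi xi (hb j) (xb j) p q *
        φX (Rcorr WQ WK σD hi xi (hb j) (xb j) p q)) • (xi p - xb j q)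

/-- Feature update of the bilevel attention module:
`h'ᵢ(p) = hᵢ(p) + ∑_{j∈J} β_j • φ_m(∑_q α_j[p,q] • (W_Vᵀ h_j(q)))`. -/
noncomputable def featUpdate {d dr dv ni : ℕ} {ι : Type*} [Fintype ι]
    (WQ WK : Matrix (Fin d) (Fin dr) ℝ) (WV : Matrix (Fin d) (Fin dv) ℝ)
    (σD : ℝ → ℝ) (φm : EuclideanSpace ℝ (Fin dv) → EuclideanSpace ℝ (Fin d))
    (hi : Fin ni → EuclideanSpace ℝ (Fin d)) (xi : Fin ni → EuclideanSpace ℝ (Fin 3))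
    (nb : ι → ℕ)
    (hb : ∀ j, Fin (nb j) → EuclideanSpace ℝ (Fin d))
    (xb : ∀ j, Fin (nb j) → EuclideanSpace ℝ (Fin 3))
    (e : ι → ℝ) (p : Fin ni) : EuclideanSpace ℝ (Fin d) :=
  hi p + ∑ j : ι, betaAtt WQ WK σD hi xi nb hb xb e j •
    φm (∑ q : Fin (nb j),
      alphaAtt WQ WK σD hi xi (hb j) (xb j) p q •
        Matrix.toEuclideanLin WV.transpose (hb j q))

/-! Every score in the attention module sees the coordinates only through the pairwise distances
`‖xᵢ(p) − x_j(q)‖`, so any isometry of space applied to all atoms leaves `R`, hence `α`, `r`, `β`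
and the feature update, unchanged; `x ↦ Q x + t` with `Q` orthogonal is such an isometry. -/

theorem Matrix.norm_toEuclideanLin_of_mem_orthogonalGroup {n : Type*} [Fintype n] [DecidableEq n]
    {Q : Matrix n n ℝ} (hQ : Q ∈ Matrix.orthogonalGroup n ℝ) (x : EuclideanSpace ℝ n) :
    ‖Matrix.toEuclideanLin Q x‖ = ‖x‖ := by
  rw [← Matrix.coe_toEuclideanCLM_eq_toEuclideanLin, ContinuousLinearMap.coe_coe]
  exact ContinuousLinearMap.norm_map_of_mem_unitary (Unitary.map_mem Matrix.toEuclideanCLM hQ) x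

theorem Matrix.isometry_toEuclideanLin_add_const {n : Type*} [Fintype n] [DecidableEq n]
    {Q : Matrix n n ℝ} (hQ : Q ∈ Matrix.orthogonalGroup n ℝ) (t : EuclideanSpace ℝ n) :
    Isometry (fun x => Matrix.toEuclideanLin Q x + t) :=
  (isometry_add_right t).comp
    (AddMonoidHomClass.isometry_of_norm _ (Matrix.norm_toEuclideanLin_of_mem_orthogonalGroup hQ))

section IsometryInvariance

variable {d dr : ℕ} (WQ WK : Matrix (Fin d) (Fin dr) ℝ) (σD : ℝ → ℝ)
  {f : EuclideanSpace ℝ (Fin 3) → EuclideanSpace ℝ (Fin 3)}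

theorem Rcorr_comp_isometry {ni nj : ℕ} (hf : Isometry f)
    (hi : Fin ni → EuclideanSpace ℝ (Fin d)) (xi : Fin ni → EuclideanSpace ℝ (Fin 3))
    (hj : Fin nj → EuclideanSpace ℝ (Fin d)) (xj : Fin nj → EuclideanSpace ℝ (Fin 3)) :
    Rcorr WQ WK σD hi (f ∘ xi) hj (f ∘ xj) = Rcorr WQ WK σD hi xi hj xj := by
  funext p q
  simp only [Rcorr, Function.comp_apply, ← dist_eq_norm, hf.dist_eq]

theorem featUpdate_comp_isometry {dv ni : ℕ} {ι : Type*} [Fintype ι] (hf : Isometry f)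
    (WV : Matrix (Fin d) (Fin dv) ℝ) (φm : EuclideanSpace ℝ (Fin dv) → EuclideanSpace ℝ (Fin d))
    (hi : Fin ni → EuclideanSpace ℝ (Fin d)) (xi : Fin ni → EuclideanSpace ℝ (Fin 3))
    (nb : ι → ℕ) (hb : ∀ j, Fin (nb j) → EuclideanSpace ℝ (Fin d))
    (xb : ∀ j, Fin (nb j) → EuclideanSpace ℝ (Fin 3)) (e : ι → ℝ) :
    featUpdate WQ WK WV σD φm hi (f ∘ xi) nb hb (fun j => f ∘ xb j) e
      = featUpdate WQ WK WV σD φm hi xi nb hb xb e := by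
  funext p
  simp only [featUpdate, betaAtt, rBlock, alphaAtt, Rcorr_comp_isometry WQ WK σD hf]

end IsometryInvariance

theorem featUpdate_E3_invariant_general {d dr dv ni : ℕ} {ι : Type*} [Fintype ι]
    (nb : ι → ℕ)
    (WQ WK : Matrix (Fin d) (Fin dr) ℝ) (WV : Matrix (Fin d) (Fin dv) ℝ)
    (σD : ℝ → ℝ) (φm : EuclideanSpace ℝ (Fin dv) → EuclideanSpace ℝ (Fin d))
    (hi : Fin ni → EuclideanSpace ℝ (Fin d)) (xi : Fin ni → EuclideanSpace ℝ (Fin 3))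
    (hb : ∀ j, Fin (nb j) → EuclideanSpace ℝ (Fin d))
    (xb : ∀ j, Fin (nb j) → EuclideanSpace ℝ (Fin 3))
    (e : ι → ℝ)
    (Q : Matrix (Fin 3) (Fin 3) ℝ) (hQ : Q ∈ Matrix.orthogonalGroup (Fin 3) ℝ)
    (t : EuclideanSpace ℝ (Fin 3)) :
    featUpdate WQ WK WV σD φm hi (fun p => Matrix.toEuclideanLin Q (xi p) + t)
        nb hb (fun j q => Matrix.toEuclideanLin Q (xb j q) + t) e
      = featUpdate WQ WK WV σD φm hi xi nb hb xb e :=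
  featUpdate_comp_isometry WQ WK σD (Matrix.isometry_toEuclideanLin_add_const hQ t)
    WV φm hi xi nb hb xb e

theorem featUpdate_E3_invariant {d dr dv ni : ℕ} {ι : Type*} [Fintype ι] [Nonempty ι]
    (hni : 1 ≤ ni) (nb : ι → ℕ) (hnb : ∀ j, 1 ≤ nb j)
    (WQ WK : Matrix (Fin d) (Fin dr) ℝ) (WV : Matrix (Fin d) (Fin dv) ℝ)
    (σD : ℝ → ℝ) (φm : EuclideanSpace ℝ (Fin dv) → EuclideanSpace ℝ (Fin d))
    (hi : Fin ni → EuclideanSpace ℝ (Fin d)) (xi : Fin ni → EuclideanSpace ℝ (Fin 3))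
    (hb : ∀ j, Fin (nb j) → EuclideanSpace ℝ (Fin d))
    (xb : ∀ j, Fin (nb j) → EuclideanSpace ℝ (Fin 3))
    (e : ι → ℝ)
    (Q : Matrix (Fin 3) (Fin 3) ℝ) (hQ : Q ∈ Matrix.orthogonalGroup (Fin 3) ℝ)
    (t : EuclideanSpace ℝ (Fin 3)) :
    featUpdate WQ WK WV σD φm hi (fun p => Matrix.toEuclideanLin Q (xi p) + t)
        nb hb (fun j q => Matrix.toEuclideanLin Q (xb j q) + t) e
      = featUpdate WQ WK WV σD φm hi xi nb hb xb e :=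
  featUpdate_E3_invariant_general nb WQ WK WV σD φm hi xi hb xb e Q hQ t
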